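/- Let L be a real symmetric matrix commuting with M = (e_a - e_b)(e_a - e_b)^T (a ≠ b), α ∈ R, and let (τ_k) be a real sequence with 2ατ_k ∈ π(2Z+1) for all k. If exp(-iτ_k L) e_a → γ e_a as k → ∞ for some complex γ (almost periodicity at a along τ_k), then exp(-iτ_k (L + αM)) e_b → γ e_a as k → ∞; i.e., the perturbed system exhibits pretty good state transfer between a and b along the sequence (τ_k). -/

import Mathlib

/-!
With `w = e_a - e_b`, the matrix `P = wwᵀ/2` is idempotent, so `exp(t P) = 1 + (eᵗ - 1) P`. The
phase condition gives `e^{-2iτα} = -1`, hence `exp(-iτα wwᵀ) = 1 - wwᵀ`, the permutation matrix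
of the transposition `(a b)`. As `L` commutes with `wwᵀ`,
`exp(-iτ(L + α wwᵀ)) e_b = exp(-iτL) (1 - wwᵀ) e_b = exp(-iτL) e_a`, so the perturbed sequence is
literally the almost periodic one.
-/

open Matrix Complex Filter
open scoped Nat

theorem NormedSpace.exp_smul_of_isIdempotentElem {𝕂 𝔸 : Type*} [RCLike 𝕂] [Ring 𝔸]
    [TopologicalSpace 𝔸] [IsTopologicalRing 𝔸] [T2Space 𝔸] [Algebra 𝕂 𝔸] [ContinuousSMul 𝕂 𝔸]
    {P : 𝔸} (hP : IsIdempotentElem P) (t : 𝕂) :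
    exp (t • P) = 1 + (exp t - 1) • P := by
  have hsum : HasSum (fun n => (n ! : 𝕂)⁻¹ • (t • P) ^ n) (exp t • P + (1 - P)) := by
    convert ((exp_series_hasSum_exp' (𝕂 := 𝕂) t).smul_const P).add
      (hasSum_pi_single 0 (1 - P)) using 1
    funext n
    cases n with
    | zero => simp
    | succ n => simp [smul_pow, hP.pow_succ_eq, smul_smul]
  rw [(congrFun (exp_eq_tsum 𝕂) (t • P)).trans hsum.tsum_eq, sub_smul, one_smul]
  abel

theorem NormedSpace.exp_smul_eq_one_sub_of_mul_self_eq_two_smul {𝔸 : Type*} [Ring 𝔸]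
    [TopologicalSpace 𝔸] [IsTopologicalRing 𝔸] [T2Space 𝔸] [Algebra ℂ 𝔸] [ContinuousSMul ℂ 𝔸]
    {A : 𝔸} (hA : A * A = (2 : ℂ) • A) {c : ℂ} (hc : Complex.exp (2 * c) = -1) :
    exp (c • A) = 1 - A := by
  have hP : IsIdempotentElem ((2 : ℂ)⁻¹ • A) := by
    rw [IsIdempotentElem, smul_mul_smul_comm, hA, smul_smul]
    norm_num
  have hcA : c • A = (2 * c) • ((2 : ℂ)⁻¹ • A) := by
    rw [smul_smul]
    congr 1
    field_simp
  rw [hcA, exp_smul_of_isIdempotentElem hP, ← Complex.exp_eq_exp_ℂ, hc, smul_smul]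
  norm_num
  abel

theorem Complex.exp_neg_I_mul_odd_mul_pi (m : ℤ) :
    Complex.exp (-(I * ((2 * m + 1) * Real.pi : ℝ))) = -1 := by
  have h : -(I * ((2 * m + 1) * Real.pi : ℝ)) =
      (-(m + 1) : ℤ) * (2 * Real.pi * I) + Real.pi * I := by
    push_cast
    ring
  rw [h, Complex.exp_add, Complex.exp_int_mul_two_pi_mul_I, Complex.exp_pi_mul_I, one_mul]

namespace Matrix

variable {ι R : Type*} [Fintype ι] [DecidableEq ι] [CommRing R] {a b : ι}

theorem dotProduct_self_single_sub_single (hab : a ≠ b) :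
    (Pi.single a 1 - Pi.single b 1 : ι → R) ⬝ᵥ (Pi.single a 1 - Pi.single b 1) = 2 := by
  simp [dotProduct_sub, dotProduct_single, hab, hab.symm]
  norm_num

theorem vecMulVec_single_sub_single_mul_self (hab : a ≠ b) :
    vecMulVec (Pi.single a 1 - Pi.single b 1 : ι → R) (Pi.single a 1 - Pi.single b 1) *
      vecMulVec (Pi.single a 1 - Pi.single b 1) (Pi.single a 1 - Pi.single b 1) =
    (2 : R) • vecMulVec (Pi.single a 1 - Pi.single b 1) (Pi.single a 1 - Pi.single b 1) := by
  rw [vecMulVec_mul_vecMulVec, dotProduct_self_single_sub_single hab, vecMulVec_smul]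

theorem one_sub_vecMulVec_single_sub_single_mulVec_single (hab : a ≠ b) :
    (1 - vecMulVec (Pi.single a 1 - Pi.single b 1 : ι → R) (Pi.single a 1 - Pi.single b 1)) *ᵥ
      Pi.single b 1 = Pi.single a 1 := by
  rw [sub_mulVec, one_mulVec, vecMulVec_mulVec, dotProduct_single]
  simp [hab.symm]

end Matrix

theorem pgst_of_almost_periodicity_general {n : ℕ}
    (L : Matrix (Fin n) (Fin n) ℝ) (a b : Fin n) (hab : a ≠ b)
    (α : ℝ) (τ : ℕ → ℝ) (hτ : ∀ k, ∃ m : ℤ, 2 * α * τ k = (2 * m + 1) * Real.pi)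
    (hcomm :
      L * vecMulVec (Pi.single a 1 - Pi.single b 1) (Pi.single a 1 - Pi.single b 1) =
      vecMulVec (Pi.single a 1 - Pi.single b 1) (Pi.single a 1 - Pi.single b 1) * L)
    (γ : ℂ)
    (hap : Tendsto
      (fun k => NormedSpace.exp ((-(I * τ k)) • L.map Complex.ofReal) *ᵥ
        Pi.single a 1)
      atTop (nhds (γ • (Pi.single a 1 : Fin n → ℂ)))) :
    Tendsto
      (fun k => NormedSpace.exp ((-(I * τ k)) •
        (L.map Complex.ofReal + (α : ℂ) •
          vecMulVec (Pi.single a 1 - Pi.single b 1) (Pi.single a 1 - Pi.single b 1))) *ᵥ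
        Pi.single b 1)
      atTop (nhds (γ • (Pi.single a 1 : Fin n → ℂ))) := by
  set M : Matrix (Fin n) (Fin n) ℂ :=
    vecMulVec (Pi.single a 1 - Pi.single b 1) (Pi.single a 1 - Pi.single b 1)
  have hM : (vecMulVec (Pi.single a 1 - Pi.single b 1) (Pi.single a 1 - Pi.single b 1) :
      Matrix (Fin n) (Fin n) ℝ).map Complex.ofRealHom = M := by
    ext i j
    simp [M, vecMulVec_apply, Pi.single_apply, apply_ite Complex.ofReal]
  have hLM : Commute (L.map Complex.ofReal) M := by
    have h := congrArg (Matrix.map · Complex.ofRealHom) hcomm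
    rwa [Matrix.map_mul, Matrix.map_mul, hM] at h
  have hswap (k : ℕ) :
      NormedSpace.exp ((-(I * τ k)) • (L.map Complex.ofReal + (α : ℂ) • M)) *ᵥ Pi.single b 1 =
        NormedSpace.exp ((-(I * τ k)) • L.map Complex.ofReal) *ᵥ Pi.single a 1 := by
    obtain ⟨m, hm⟩ := hτ k
    have hphase : Complex.exp (2 * (-(I * τ k) * α)) = -1 := by
      rw [← Complex.exp_neg_I_mul_odd_mul_pi m, ← hm]
      push_cast
      congr 1
      ring
    rw [smul_add, smul_smul, Matrix.exp_add_of_commute _ _ ((hLM.smul_left _).smul_right _),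
      ← mulVec_mulVec, NormedSpace.exp_smul_eq_one_sub_of_mul_self_eq_two_smul
        (vecMulVec_single_sub_single_mul_self hab) hphase,
      one_sub_vecMulVec_single_sub_single_mulVec_single hab]
  simpa only [hswap] using hap

/-- If `L` is real symmetric, commutes with `M = (e_a - e_b)(e_a - e_b)ᵀ`
(`a ≠ b`), `2ατ_k` is an odd multiple of `π` for every `k`, and
`exp(-iτ_k L) e_a → γ e_a`, then `exp(-iτ_k (L + αM)) e_b → γ e_a`:
pretty good state transfer between `a` and `b` along `(τ_k)`. -/
theorem pgst_of_almost_periodicity {n : ℕ}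
    (L : Matrix (Fin n) (Fin n) ℝ) (hL : L.IsSymm) (a b : Fin n) (hab : a ≠ b)
    (α : ℝ) (τ : ℕ → ℝ) (hτ : ∀ k, ∃ m : ℤ, 2 * α * τ k = (2 * m + 1) * Real.pi)
    (hcomm :
      L * vecMulVec (Pi.single a 1 - Pi.single b 1) (Pi.single a 1 - Pi.single b 1) =
      vecMulVec (Pi.single a 1 - Pi.single b 1) (Pi.single a 1 - Pi.single b 1) * L)
    (γ : ℂ)
    (hap : Tendsto
      (fun k => NormedSpace.exp ((-(I * τ k)) • L.map Complex.ofReal) *ᵥ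
        Pi.single a 1)
      atTop (nhds (γ • (Pi.single a 1 : Fin n → ℂ)))) :
    Tendsto
      (fun k => NormedSpace.exp ((-(I * τ k)) •
        (L.map Complex.ofReal + (α : ℂ) •
          vecMulVec (Pi.single a 1 - Pi.single b 1) (Pi.single a 1 - Pi.single b 1))) *ᵥ
        Pi.single b 1)
      atTop (nhds (γ • (Pi.single a 1 : Fin n → ℂ))) :=
  pgst_of_almost_periodicity_general L a b hab α τ hτ hcomm γ hap
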